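/- Let n ≥ 1, let u⋆ ∈ {X,Y,Z}^{n−1}, set b^{(0)} := (u⋆, X) and b^{(1)} := (u⋆, Y), and let ρ^{(0)} := ρ_{b^{(0)}} and ρ^{(1)} := ρ_{b^{(1)}} be the corresponding prefix/tree states with coefficients α, β_1,…,β_{n−1}. Then ρ^{(0)} − ρ^{(1)} = (α/D)(P_{b^{(0)}}^{(n)} − P_{b^{(1)}}^{(n)}), and the trace distance satisfies (1/2)‖ρ^{(0)} − ρ^{(1)}‖₁ = |α|/√2. -/

import Mathlib

open Matrix Finset

noncomputable section

/-- The three Pauli matrices `σ_X, σ_Y, σ_Z` as `2 × 2` complex matrices. -/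
def pauli : Fin 3 → Matrix (Fin 2) (Fin 2) ℂ :=
  ![!![0, 1; 1, 0], !![0, -Complex.I; Complex.I, 0], !![1, 0; 0, -1]]

/-- The prefix Pauli operator `P_b^{(k)} = (⊗_{i=1}^k σ_{b_i}) ⊗ I^{⊗(n-k)}`, realized as a
`2^n × 2^n` complex matrix indexed by `Fin n → Fin 2` (the `i`-th tensor factor of the Kronecker
product is `σ_{b_i}` if `i < k` (0-indexed) and the identity otherwise). -/
def prefixPauli (n : ℕ) (b : Fin n → Fin 3) (k : ℕ) :
    Matrix (Fin n → Fin 2) (Fin n → Fin 2) ℂ :=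
  Matrix.of fun x y =>
    ∏ i : Fin n,
      (if (i : ℕ) < k then pauli (b i) else (1 : Matrix (Fin 2) (Fin 2) ℂ)) (x i) (y i)

/-- The prefix/tree state `ρ_b = (1/D)(I + ∑_{k=1}^{n-1} β_k P_b^{(k)} + α P_b^{(n)})`,
with `D = 2^n`. -/
def rhoState (n : ℕ) (b : Fin n → Fin 3) (α : ℝ) (β : ℕ → ℝ) :
    Matrix (Fin n → Fin 2) (Fin n → Fin 2) ℂ :=
  ((2 : ℂ) ^ n)⁻¹ •
    (1 + ∑ k ∈ Finset.Icc 1 (n - 1), (β k : ℂ) • prefixPauli n b k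
       + (α : ℂ) • prefixPauli n b n)

/-- The trace norm of a Hermitian matrix: the sum of the absolute values of its (real)
eigenvalues. -/
def traceNorm {d : Type*} [Fintype d] [DecidableEq d] {A : Matrix d d ℂ}
    (hA : A.IsHermitian) : ℝ :=
  ∑ i, |hA.eigenvalues i|

/-!
The strings `b0` and `b1` agree on the first `n - 1` sites, so every prefix operator of order
`k ≤ n - 1` cancels in `ρ⁽⁰⁾ - ρ⁽¹⁾`, leaving `(α / D) (P₀ - P₁)` with `P₀, P₁` the full Pauli
strings. These are involutions, and they anticommute because they differ in exactly one tensor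
factor, where `σ_X σ_Y = -σ_Y σ_X`. Hence `(P₀ - P₁)² = 2`, so every eigenvalue of the difference
has absolute value `√2 |α| / D`, and the `D` eigenvalues add up to a trace norm of `√2 |α|`.
-/

def piKron {ι m R : Type*} [Fintype ι] [CommSemiring R] (f : ι → Matrix m m R) :
    Matrix (ι → m) (ι → m) R :=
  Matrix.of fun x y => ∏ i, f i (x i) (y i)

section piKron

variable {ι m R : Type*} [Fintype ι] [CommSemiring R]

theorem piKron_mul [DecidableEq ι] [Fintype m] (f g : ι → Matrix m m R) :
    piKron f * piKron g = piKron fun i => f i * g i := by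
  ext x y
  simp only [piKron, mul_apply, of_apply, ← prod_mul_distrib]
  exact (Fintype.prod_sum fun i k => f i (x i) k * g i k (y i)).symm

theorem piKron_one [DecidableEq m] : piKron (fun _ : ι => (1 : Matrix m m R)) = 1 := by
  ext x y
  simp only [piKron, of_apply, one_apply, prod_boole, funext_iff, mem_univ, true_implies]

theorem piKron_mul_self [DecidableEq ι] [DecidableEq m] [Fintype m] {f : ι → Matrix m m R}
    (hf : ∀ i, f i * f i = 1) : piKron f * piKron f = 1 := by
  simp only [piKron_mul, hf, piKron_one]

theorem piKron_mul_add_mul_eq_zero [DecidableEq ι] [Fintype m] {f g : ι → Matrix m m R}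
    (j : ι) (hcomm : ∀ i ≠ j, f i * g i = g i * f i) (hanti : f j * g j + g j * f j = 0) :
    piKron f * piKron g + piKron g * piKron f = 0 := by
  ext x y
  rw [piKron_mul, piKron_mul]
  simp only [piKron, Matrix.add_apply, of_apply, Matrix.zero_apply]
  rw [← mul_prod_erase univ _ (mem_univ j), ← mul_prod_erase univ _ (mem_univ j),
    prod_congr rfl fun i hi => by rw [hcomm i (ne_of_mem_erase hi)], ← add_mul,
    ← Matrix.add_apply, hanti, Matrix.zero_apply, zero_mul]

end piKron

theorem pauli_mul_self (a : Fin 3) : pauli a * pauli a = 1 := by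
  fin_cases a <;> ext i j <;> fin_cases i <;> fin_cases j <;>
    simp [pauli, mul_apply, Fin.sum_univ_two, one_apply]

theorem pauli_anticomm {a b : Fin 3} (hab : a ≠ b) :
    pauli a * pauli b + pauli b * pauli a = 0 := by
  fin_cases a <;> fin_cases b <;> (try exact absurd rfl hab) <;> ext i j <;> fin_cases i <;>
    fin_cases j <;> simp [pauli]

theorem prefixPauli_eq_piKron (n : ℕ) (b : Fin n → Fin 3) :
    prefixPauli n b n = piKron fun i => pauli (b i) := by
  simp only [prefixPauli, piKron, Fin.is_lt, if_true]

theorem prefixPauli_congr {n k : ℕ} {b b' : Fin n → Fin 3}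
    (hb : ∀ i : Fin n, (i : ℕ) < k → b i = b' i) : prefixPauli n b k = prefixPauli n b' k := by
  ext x y
  simp only [prefixPauli, of_apply]
  refine prod_congr rfl fun i _ => ?_
  split_ifs with hi
  · rw [hb i hi]
  · rfl

theorem rhoState_sub_rhoState {n : ℕ} {b b' : Fin n → Fin 3}
    (hb : ∀ i : Fin n, (i : ℕ) < n - 1 → b i = b' i) (α : ℝ) (β : ℕ → ℝ) :
    rhoState n b α β - rhoState n b' α β =
      ((α : ℂ) / 2 ^ n) • (prefixPauli n b n - prefixPauli n b' n) := by
  have hprefix : ∀ k ∈ Icc 1 (n - 1), prefixPauli n b k = prefixPauli n b' k :=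
    fun k hk => prefixPauli_congr fun i hi => hb i (hi.trans_le (mem_Icc.mp hk).2)
  rw [rhoState, rhoState, sum_congr rfl fun k hk => by rw [hprefix k hk], ← smul_sub,
    div_eq_inv_mul, ← smul_smul, add_sub_add_left_eq_sub, smul_sub, smul_sub, smul_sub]

theorem prefixPauli_sub_mul_self {n : ℕ} {b b' : Fin n → Fin 3} (j : Fin n)
    (hb : ∀ i ≠ j, b i = b' i) (hj : b j ≠ b' j) :
    (prefixPauli n b n - prefixPauli n b' n) * (prefixPauli n b n - prefixPauli n b' n) =
      (2 : ℂ) • 1 := by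
  have hsq : ∀ b : Fin n → Fin 3, prefixPauli n b n * prefixPauli n b n = 1 := fun b => by
    rw [prefixPauli_eq_piKron]
    exact piKron_mul_self fun i => pauli_mul_self (b i)
  have hanti : prefixPauli n b n * prefixPauli n b' n + prefixPauli n b' n * prefixPauli n b n
      = 0 := by
    simp only [prefixPauli_eq_piKron]
    exact piKron_mul_add_mul_eq_zero j (fun i hi => by rw [hb i hi]) (pauli_anticomm hj)
  rw [sub_mul, mul_sub, mul_sub, hsq, hsq, eq_neg_of_add_eq_zero_left hanti, two_smul]
  abel

theorem Matrix.IsHermitian.eigenvalues_sq_eq {𝕜 d : Type*} [RCLike 𝕜] [Fintype d]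
    [DecidableEq d] {A : Matrix d d 𝕜} (hA : A.IsHermitian) {c : ℝ}
    (h : A * A = (c : 𝕜) • 1) (j : d) : hA.eigenvalues j ^ 2 = c := by
  have : Nonempty d := ⟨j⟩
  have hc : A ^ 2 = algebraMap ℝ (Matrix d d 𝕜) c := by
    rw [sq, h, Algebra.algebraMap_eq_smul_one, RCLike.real_smul_eq_coe_smul (K := 𝕜)]
  simpa [hc, spectrum.scalar_eq] using
    spectrum.pow_mem_pow A 2 (hA.eigenvalues_mem_spectrum_real j)

theorem traceNorm_eq_of_mul_self {d : Type*} [Fintype d] [DecidableEq d] {A : Matrix d d ℂ}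
    (hA : A.IsHermitian) {c : ℝ} (hc : 0 ≤ c) (h : A * A = ((c ^ 2 : ℝ) : ℂ) • 1) :
    traceNorm hA = Fintype.card d * c := by
  have habs : ∀ j, |hA.eigenvalues j| = c := fun j =>
    ((sq_eq_sq_iff_abs_eq_abs _ _).mp (hA.eigenvalues_sq_eq h j)).trans (abs_of_nonneg hc)
  simp [traceNorm, habs]

/-- Hard pair with prefix cancellation: for `b^{(0)} = (u⋆, X)` and `b^{(1)} = (u⋆, Y)`,
the corresponding prefix/tree states satisfy
`ρ^{(0)} − ρ^{(1)} = (α/D)(P_{b^{(0)}}^{(n)} − P_{b^{(1)}}^{(n)})` and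
`(1/2)‖ρ^{(0)} − ρ^{(1)}‖₁ = |α|/√2`. -/
theorem hard_pair_prefix_cancellation (n : ℕ) (hn : 1 ≤ n)
    (ustar : Fin (n - 1) → Fin 3) (α : ℝ) (β : ℕ → ℝ)
    (b0 b1 : Fin n → Fin 3)
    (hb0 : ∀ i : Fin n, b0 i = if h : (i : ℕ) < n - 1 then ustar ⟨(i : ℕ), h⟩ else 0)
    (hb1 : ∀ i : Fin n, b1 i = if h : (i : ℕ) < n - 1 then ustar ⟨(i : ℕ), h⟩ else 1)
    (hΔ : (rhoState n b0 α β - rhoState n b1 α β).IsHermitian) :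
    rhoState n b0 α β - rhoState n b1 α β =
      ((α : ℂ) / (2 : ℂ) ^ n) • (prefixPauli n b0 n - prefixPauli n b1 n) ∧
    (1 / 2) * traceNorm hΔ = |α| / Real.sqrt 2 := by
  have hprefix : ∀ i : Fin n, (i : ℕ) < n - 1 → b0 i = b1 i := fun i hi => by
    rw [hb0, hb1, dif_pos hi, dif_pos hi]
  have hdiff := rhoState_sub_rhoState hprefix α β
  refine ⟨hdiff, ?_⟩
  let last : Fin n := ⟨n - 1, by omega⟩
  have hP := prefixPauli_sub_mul_self last
    (fun i hi => hprefix i (lt_of_le_of_ne (Nat.le_sub_one_of_lt i.2) (Fin.val_ne_of_ne hi)))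
    (by simp [hb0, hb1, last])
  set c := √2 * |α| / 2 ^ n
  have hc : c ^ 2 = 2 * α ^ 2 / (2 ^ n) ^ 2 := by
    rw [div_pow, mul_pow, Real.sq_sqrt zero_le_two, sq_abs]
  have hsq : (rhoState n b0 α β - rhoState n b1 α β) *
      (rhoState n b0 α β - rhoState n b1 α β) = ((c ^ 2 : ℝ) : ℂ) • 1 := by
    rw [hdiff, smul_mul_smul_comm, hP, smul_smul, hc]
    push_cast
    ring_nf
  rw [traceNorm_eq_of_mul_self hΔ (by positivity) hsq, Fintype.card_fun, Fintype.card_fin,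
    Fintype.card_fin]
  have hsqrt : √2 * √2 = 2 := Real.mul_self_sqrt zero_le_two
  simp only [c]
  push_cast
  field_simp
  linear_combination |α| * hsqrt

end
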